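/- The algebra W(2) does not satisfy the identity st^4_2, i.e. there exist elements a,b,c,d of W(2) such that Σ_{σ ∈ S_4} sgn(σ) x_{σ(4)}(x_{σ(3)}(x_{σ(2)}x_{σ(1)})) evaluated at (a,b,c,d) is nonzero. -/

import Mathlib

def tbl (F : Type*) [Field F] : Fin 8 → Fin 8 → Fin 8 → F :=
  ![![![-1, 0, 0, 0, 0, 0, 0, 0], ![0, -3, 0, 0, 0, 0, 0, 0], ![0, 0, 1, 0, 0, 0, 0, 0], ![0, 0, 0, 3, 0, 0, 0, 0], ![0, 0, 0, 0, -1, 0, 0, 0], ![0, 0, 0, 0, 0, 1, 0, 0], ![0, 0, 0, 0, 0, 0, 1, 0], ![0, 0, 0, 0, 0, 0, 0, -1]],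
    ![![0, 3, 0, 0, 0, 0, 0, 0], ![0, 0, 0, 0, 0, 0, 0, 0], ![2, 0, 0, 0, 0, 0, 0, 0], ![0, 0, 1, 0, 0, 0, 0, 0], ![0, 0, 0, 0, 0, 0, 0, 0], ![0, 0, 0, 0, -1, 0, 0, 0], ![0, 0, 0, 0, 0, 0, 0, 1], ![0, 0, 0, 0, 0, 0, 0, 0]],
    ![![0, 0, -2, 0, 0, 0, 0, 0], ![-1, 0, 0, 0, 0, 0, 0, 0], ![0, 0, 0, -3, 0, 0, 0, 0], ![0, 0, 0, 0, 0, 0, 0, 0], ![0, 0, 0, 0, 0, 1, 0, 0], ![0, 0, 0, 0, 0, 0, 0, 0], ![0, 0, 0, 0, 0, 0, 0, 0], ![0, 0, 0, 0, 0, 0, -1, 0]],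
    ![![0, 0, 0, 0, 0, 0, 0, 0], ![0, 0, 0, 0, 0, 0, 0, 0], ![0, 0, 0, 0, 0, 0, 0, 0], ![0, 0, 0, 0, 0, 0, 0, 0], ![0, 0, 0, 0, 0, 0, 0, 0], ![0, 0, 0, 0, 0, 0, 0, 0], ![0, 0, 0, 0, 0, 0, 0, 0], ![0, 0, 0, 0, 0, 0, 0, 0]],
    ![![-2, 0, 0, 0, 0, 0, 0, 0], ![0, -3, 0, 0, 0, 0, 0, 0], ![0, 0, -1, 0, 0, 0, 0, 0], ![0, 0, 0, 0, 0, 0, 0, 0], ![0, 0, 0, 0, -2, 0, 0, 0], ![0, 0, 0, 0, 0, -1, 0, 0], ![0, 0, 0, 0, 0, 0, -1, 0], ![0, 0, 0, 0, 0, 0, 0, -2]],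
    ![![0, 0, 2, 0, 0, 0, 0, 0], ![1, 0, 0, 0, 0, 0, 0, 0], ![0, 0, 0, 3, 0, 0, 0, 0], ![0, 0, 0, 0, 0, 0, 0, 0], ![0, 0, 0, 0, 0, -1, 0, 0], ![0, 0, 0, 0, 0, 0, 0, 0], ![0, 0, 0, 0, 0, 0, 0, 0], ![0, 0, 0, 0, 0, 0, 1, 0]],
    ![![0, 0, 2, 0, 0, 0, 0, 0], ![1, 0, 0, 0, 0, 0, 0, 0], ![0, 0, 0, 3, 0, 0, 0, 0], ![0, 0, 0, 0, 0, 0, 0, 0], ![0, 0, 0, 0, 0, -1, 0, 0], ![0, 0, 0, 0, 0, 0, 0, 0], ![0, 0, 0, 0, 0, 0, 0, 0], ![0, 0, 0, 0, 0, 0, 1, 0]],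
    ![![0, 0, 0, 0, 0, 0, 0, 0], ![0, 1, 0, 0, 0, 0, 0, 0], ![0, 0, -1, 0, 0, 0, 0, 0], ![0, 0, 0, -2, 0, 0, 0, 0], ![0, 0, 0, 0, 0, 0, 0, 0], ![0, 0, 0, 0, 0, -1, 0, 0], ![0, 0, 0, 0, 0, 0, -1, 0], ![0, 0, 0, 0, 0, 0, 0, 0]]]

def mul (F : Type*) [Field F] (x y : Fin 8 → F) : Fin 8 → F :=
  fun k => ∑ i, ∑ j, x i * y j * tbl F i j k

/-!
Take `x = (e₄, e₁, e₈, e₂)`; the basis vector `eₖ₊₁` is `Pi.single k 1`. As `e₄` is a left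
annihilator, a term of `st⁴₂` vanishes unless `e₄` is the innermost factor, which leaves an
alternating sum over `S₃` of words in the left multiplications by `e₁, e₈, e₂`, applied to `e₄`.
Both `e₁` and `e₈` act on `e₄` and `e₃` by scalars (`3, -2` and `1, -1`) and `e₂ e₄ = e₃`, so the
six words give multiples of `e₃`, which add up to `e₃`.
-/

open Equiv Finset

theorem sum_perm_fin_succ_eq_of_apply_zero_ne {M : Type*} [AddCommMonoid M] {n : ℕ}
    (f : Perm (Fin (n + 1)) → M) (hf : ∀ σ, σ 0 ≠ 0 → f σ = 0) :
    ∑ σ, f σ = ∑ τ : Perm (Fin n), f (Perm.decomposeFin.symm (0, τ)) := by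
  have hmoved (p : Fin n) : ∑ τ : Perm (Fin n), f (Perm.decomposeFin.symm (p.succ, τ)) = 0 :=
    sum_eq_zero fun τ _ => hf _ <| by simp [Perm.decomposeFin_symm_apply_zero]
  rw [← Equiv.sum_comp Perm.decomposeFin.symm, Fintype.sum_prod_type, Fin.sum_univ_succ,
    sum_eq_zero fun p _ => hmoved p, add_zero]

theorem sum_perm_fin_three {M : Type*} [AddCommGroup M] (f : Fin 3 → Fin 3 → Fin 3 → M) :
    ∑ σ : Perm (Fin 3), (Perm.sign σ : ℤ) • f (σ 0) (σ 1) (σ 2) =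
      f 0 1 2 - f 1 0 2 - f 0 2 1 + f 2 0 1 + f 1 2 0 - f 2 1 0 := by
  have apply_two (p : Fin 3) (τ : Perm (Fin 2)) :
      Perm.decomposeFin.symm (p, τ) 2 = swap 0 p (τ 1).succ :=
    Perm.decomposeFin_symm_apply_succ τ p 1
  rw [← Equiv.sum_comp Perm.decomposeFin.symm, Fintype.sum_prod_type]
  simp only [← Equiv.sum_comp Perm.decomposeFin.symm, Fintype.sum_prod_type]
  simp only [univ_unique, Fin.default_eq_zero, Perm.default_eq, sum_singleton, Fin.sum_univ_succ,
    Perm.decomposeFin.symm_sign, Perm.decomposeFin_symm_apply_zero, Perm.decomposeFin_symm_apply_one,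
    apply_two, swap_apply_def, Perm.sign_one, Fin.succ_zero_eq_one, Fin.succ_one_eq_two, Fin.succ_ne_zero,
    one_ne_zero, Fin.reduceEq, if_true, if_false, one_mul, neg_mul, Units.val_neg, Units.val_one, neg_smul,
    one_smul, neg_neg]
  abel

theorem sum_sign_smul_mul_mul_mul_of_left_annihilator {M : Type*} [AddCommGroup M]
    (m : M → M → M) (hm : ∀ a, m a 0 = 0) (x : Fin 4 → M) (hx : ∀ y, m (x 0) y = 0) :
    ∑ σ : Perm (Fin 4), (Perm.sign σ : ℤ) • m (x (σ 3)) (m (x (σ 2)) (m (x (σ 1)) (x (σ 0)))) =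
      ∑ τ : Perm (Fin 3), (Perm.sign τ : ℤ) •
        m (x (τ 2).succ) (m (x (τ 1).succ) (m (x (τ 0).succ) (x 0))) := by
  rw [sum_perm_fin_succ_eq_of_apply_zero_ne]
  · refine sum_congr rfl fun τ _ => ?_
    have apply_succ (i : Fin 3) : Perm.decomposeFin.symm (0, τ) i.succ = (τ i).succ := by
      simp [Perm.decomposeFin_symm_apply_succ]
    rw [Perm.decomposeFin.symm_sign, if_pos rfl, one_mul, Perm.decomposeFin_symm_apply_zero,
      show (1 : Fin 4) = (0 : Fin 3).succ from rfl, show (2 : Fin 4) = (1 : Fin 3).succ from rfl,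
      show (3 : Fin 4) = (2 : Fin 3).succ from rfl, apply_succ, apply_succ, apply_succ]
  · intro σ hσ
    obtain ⟨k, hk⟩ : ∃ k, σ k = 0 := ⟨σ.symm 0, σ.apply_symm_apply 0⟩
    have hk0 : k ≠ 0 := by rintro rfl; exact hσ hk
    fin_cases k <;> simp_all

namespace W2

variable {F : Type*} [Field F]

theorem mul_zero_right (x : Fin 8 → F) : mul F x 0 = 0 := by
  ext k
  simp [mul]

theorem mul_smul_right (x y : Fin 8 → F) (c : F) : mul F x (c • y) = c • mul F x y := by
  ext k
  simp only [mul, Pi.smul_apply, smul_eq_mul, Finset.mul_sum]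
  exact sum_congr rfl fun i _ => sum_congr rfl fun j _ => by ring

theorem mul_single_single (i j : Fin 8) :
    mul F (Pi.single i 1) (Pi.single j 1) = tbl F i j := by
  ext k
  simp [mul, Pi.single_apply]

theorem tbl_three_eq_zero : tbl F 3 = 0 := by
  ext j k
  fin_cases j <;> fin_cases k <;> rfl

theorem single_three_mul_eq_zero (y : Fin 8 → F) : mul F (Pi.single 3 1) y = 0 := by
  ext k
  simp [mul, Pi.single_apply, tbl_three_eq_zero]

theorem single_zero_mul_single_three :
    mul F (Pi.single 0 1) (Pi.single 3 1) = (3 : F) • Pi.single 3 1 := by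
  rw [mul_single_single]; ext k; fin_cases k <;> simp [tbl]

theorem single_seven_mul_single_three :
    mul F (Pi.single 7 1) (Pi.single 3 1) = (-2 : F) • Pi.single 3 1 := by
  rw [mul_single_single]; ext k; fin_cases k <;> simp [tbl]

theorem single_one_mul_single_three :
    mul F (Pi.single 1 1) (Pi.single 3 1) = Pi.single 2 1 := by
  rw [mul_single_single]; ext k; fin_cases k <;> simp [tbl]

theorem single_zero_mul_single_two :
    mul F (Pi.single 0 1) (Pi.single 2 1) = Pi.single 2 1 := by
  rw [mul_single_single]; ext k; fin_cases k <;> simp [tbl]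

theorem single_seven_mul_single_two :
    mul F (Pi.single 7 1) (Pi.single 2 1) = (-1 : F) • Pi.single 2 1 := by
  rw [mul_single_single]; ext k; fin_cases k <;> simp [tbl]

end W2

open W2 in
theorem W2_not_satisfies_st4_2_general (F : Type*) [Field F] :
    ∃ x : Fin 4 → (Fin 8 → F),
      ∑ σ : Equiv.Perm (Fin 4), (Equiv.Perm.sign σ : ℤ) •
        mul F (x (σ 3)) (mul F (x (σ 2)) (mul F (x (σ 1)) (x (σ 0)))) ≠ 0 := by
  let x : Fin 4 → Fin 8 → F := ![Pi.single 3 1, Pi.single 0 1, Pi.single 7 1, Pi.single 1 1]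
  refine ⟨x, ?_⟩
  rw [sum_sign_smul_mul_mul_mul_of_left_annihilator (mul F) mul_zero_right x
      single_three_mul_eq_zero,
    sum_perm_fin_three fun a b c => mul F (x c.succ) (mul F (x b.succ) (mul F (x a.succ) (x 0)))]
  simp only [x, Matrix.cons_val_zero, Matrix.cons_val_succ, Matrix.cons_val_one,
    Matrix.cons_val_two, Matrix.head_cons, Matrix.tail_cons, single_zero_mul_single_three,
    single_seven_mul_single_three, single_one_mul_single_three, single_zero_mul_single_two,
    single_seven_mul_single_two, mul_smul_right, smul_smul]
  convert (Pi.single_eq_zero_iff.not.2 one_ne_zero : (Pi.single 2 1 : Fin 8 → F) ≠ 0) using 2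
  module

/-- `W(2)` does not satisfy the identity `st⁴₂`. -/
theorem W2_not_satisfies_st4_2 (F : Type*) [Field F] [CharZero F] :
    ∃ x : Fin 4 → (Fin 8 → F),
      ∑ σ : Equiv.Perm (Fin 4), (Equiv.Perm.sign σ : ℤ) •
        mul F (x (σ 3)) (mul F (x (σ 2)) (mul F (x (σ 1)) (x (σ 0)))) ≠ 0 :=
  W2_not_satisfies_st4_2_general F
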